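/- arXiv:1501.02441 — 2 statements merged into one kernel-verified Lean document; each statement's English description precedes it below -/
import Mathlib

section
/- For every natural number k ≥ 2 there exists a periodic k-coloring c of the plane with p^per(c) ≤ 1/k. (This is the right-hand inequality of Theorem 1.) -/
/-!
Colour the plane by vertical stripes of width `2 / k`, the colours repeating cyclically, so
that the colouring has periods `(2, 0)` and `(0, 1)`. A unit step in direction `θ` moves the
abscissa by `cos θ`, i.e. by at most `k / 2 ≤ k - 1` stripe widths, so its endpoints can only
share a colour if they lie in the same stripe. For a starting point at relative position `f`
in its stripe this forces `cos θ ∈ [-(2/k) f, (2/k) (1 - f)]`, a set of directions of measure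
`2 (arcsin ((2/k) f) + arcsin ((2/k) (1 - f))) ≤ 2π/k`, as `arcsin z ≤ π z / 2` on `[0, 1]`.
-/

open MeasureTheory Real

noncomputable section

abbrev Plane := EuclideanSpace ℝ (Fin 2)

def vec (x y : ℝ) : Plane := (WithLp.equiv 2 (Fin 2 → ℝ)).symm ![x, y]

def dir (θ : ℝ) : Plane := vec (Real.cos θ) (Real.sin θ)

/-- The fundamental parallelogram `{t•u + s•v : 0 ≤ t, s < 1}`. -/
def para (u v : Plane) : Set Plane :=
  {x | ∃ t s : ℝ, 0 ≤ t ∧ t < 1 ∧ 0 ≤ s ∧ s < 1 ∧ x = t • u + s • v}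

/-- `p^per(c)` for a periodic coloring with fundamental parallelogram `para u v`. -/
def pper {k : ℕ} (c : Plane → Fin k) (u v : Plane) : ℝ :=
  (1 / (2 * π * (volume (para u v)).toReal)) *
    ∫ a in para u v, ∫ θ in (0:ℝ)..(2*π),
      (if c a = c (a + dir θ) then (1:ℝ) else 0)

open Set

theorem Int.floor_eq_floor_of_modEq {R : Type*} [Field R] [LinearOrder R] [IsStrictOrderedRing R]
    [FloorRing R] {k : ℕ} {a b : R} (hmod : ⌊a⌋ ≡ ⌊b⌋ [ZMOD k])
    (hab : |b - a| ≤ k - 1) : ⌊a⌋ = ⌊b⌋ := by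
  have hlt : |((⌊b⌋ - ⌊a⌋ : ℤ) : R)| < k := by
    rw [abs_lt]
    push_cast
    constructor <;> linarith [Int.floor_le a, Int.floor_le b, Int.lt_floor_add_one a,
      Int.lt_floor_add_one b, abs_le.1 hab]
  have := Int.eq_zero_of_abs_lt_dvd hmod.dvd (by exact_mod_cast hlt)
  omega

theorem Real.arcsin_le_pi_div_two_mul {z : ℝ} (h0 : 0 ≤ z) (h1 : z ≤ 1) :
    arcsin z ≤ π / 2 * z := by
  have h := mul_le_sin (arcsin_nonneg.2 h0) (arcsin_le_pi_div_two z)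
  rw [sin_arcsin (by linarith) h1] at h
  calc arcsin z = π / 2 * (2 / π * arcsin z) := by field_simp
    _ ≤ π / 2 * z := by gcongr

theorem Real.arccos_neg_sub_arccos_le {a b : ℝ} (ha : 0 ≤ a) (ha1 : a ≤ 1) (hb : 0 ≤ b)
    (hb1 : b ≤ 1) : arccos (-a) - arccos b ≤ π / 2 * (a + b) := by
  rw [arccos_neg, arccos_eq_pi_div_two_sub_arcsin, arccos_eq_pi_div_two_sub_arcsin]
  linarith [arcsin_le_pi_div_two_mul ha ha1, arcsin_le_pi_div_two_mul hb hb1]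

theorem Real.setOf_cos_mem_Icc_subset (α β : ℝ) :
    {θ ∈ Ioc 0 (2 * π) | cos θ ∈ Icc α β} ⊆
      Icc (arccos β) (arccos α) ∪ Icc (2 * π - arccos α) (2 * π - arccos β) := by
  rintro θ ⟨⟨hθ0, hθ2π⟩, hαθ, hθβ⟩
  have hmem : ∀ φ, 0 ≤ φ → φ ≤ π → cos φ = cos θ →
      φ ∈ Icc (arccos β) (arccos α) := by
    intro φ hφ0 hφπ hφ
    rw [← arccos_cos hφ0 hφπ, hφ]
    exact ⟨antitone_arccos hθβ, antitone_arccos hαθ⟩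
  rcases le_total θ π with hθπ | hπθ
  · exact Or.inl (hmem θ hθ0.le hθπ rfl)
  · obtain ⟨h1, h2⟩ := hmem (2 * π - θ) (by linarith) (by linarith) (cos_two_pi_sub θ)
    exact Or.inr ⟨by linarith, by linarith⟩

theorem Real.volume_setOf_cos_mem_Icc_le (α β : ℝ) :
    volume {θ ∈ Ioc 0 (2 * π) | cos θ ∈ Icc α β} ≤
      2 * ENNReal.ofReal (arccos α - arccos β) :=
  calc volume {θ ∈ Ioc 0 (2 * π) | cos θ ∈ Icc α β}
      ≤ volume (Icc (arccos β) (arccos α) ∪ Icc (2 * π - arccos α) (2 * π - arccos β)) :=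
        measure_mono (setOf_cos_mem_Icc_subset α β)
    _ ≤ volume (Icc (arccos β) (arccos α)) +
          volume (Icc (2 * π - arccos α) (2 * π - arccos β)) :=
        measure_union_le _ _
    _ = 2 * ENNReal.ofReal (arccos α - arccos β) := by
        rw [volume_Icc, volume_Icc, sub_sub_sub_cancel_left, two_mul]

theorem Real.intervalIntegral_ite_le_of_cos_mem_Icc (P : ℝ → Prop) [DecidablePred P]
    {α β : ℝ} (hαβ : α ≤ β) (hP : ∀ θ, P θ → cos θ ∈ Icc α β) :
    ∫ θ in (0 : ℝ)..(2 * π), (if P θ then (1 : ℝ) else 0) ≤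
      2 * (arccos α - arccos β) := by
  set S := {θ | cos θ ∈ Icc α β}
  have hS : MeasurableSet S := measurableSet_Icc.preimage continuous_cos.measurable
  have hle : ∀ θ, (if P θ then (1 : ℝ) else 0) ≤ S.indicator 1 θ := by
    intro θ
    by_cases h : P θ
    · rw [if_pos h, indicator_of_mem (show θ ∈ S from hP θ h)]; rfl
    · simp only [h, if_false]; exact indicator_nonneg (fun _ _ => zero_le_one) θ
  rw [intervalIntegral.integral_of_le two_pi_pos.le]
  calc ∫ θ in Ioc 0 (2 * π), (if P θ then (1 : ℝ) else 0)
      ≤ ∫ θ in Ioc 0 (2 * π), S.indicator 1 θ :=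
        integral_mono_of_nonneg (ae_of_all _ fun θ => by positivity)
          ((integrable_const 1).indicator hS) (ae_of_all _ hle)
    _ = (volume {θ ∈ Ioc 0 (2 * π) | cos θ ∈ Icc α β}).toReal := by
        rw [integral_indicator_one hS, measureReal_restrict_apply hS, inter_comm]; rfl
    _ ≤ 2 * (arccos α - arccos β) := by
        have hnn : 0 ≤ arccos α - arccos β := sub_nonneg.2 (antitone_arccos hαβ)
        have := ENNReal.toReal_mono (by finiteness) (volume_setOf_cos_mem_Icc_le α β)
        rwa [ENNReal.toReal_mul, ENNReal.toReal_ofReal hnn] at this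

theorem pper_le_of_forall_integral_le {k : ℕ} (c : Plane → Fin k) (u v : Plane) (p : ℝ)
    (hV : (volume (para u v)).toReal ≠ 0)
    (h : ∀ a, ∫ θ in (0 : ℝ)..(2 * π), (if c a = c (a + dir θ) then (1 : ℝ) else 0) ≤
      2 * π * p) :
    pper c u v ≤ p := by
  have hfin : volume (para u v) ≠ ⊤ := (ENNReal.toReal_ne_zero.1 hV).2
  unfold pper
  set V := (volume (para u v)).toReal
  set g := fun a => ∫ θ in (0 : ℝ)..(2 * π), (if c a = c (a + dir θ) then (1 : ℝ) else 0)
  have hg : ∀ a, 0 ≤ g a :=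
    fun a => intervalIntegral.integral_nonneg two_pi_pos.le fun θ _ => by positivity
  have hint : ∫ a in para u v, g a ≤ V * (2 * π * p) := by
    refine (integral_mono_of_nonneg (ae_of_all _ hg) (integrableOn_const hfin)
      (ae_of_all _ h)).trans_eq ?_
    rw [setIntegral_const, smul_eq_mul, measureReal_def]
  calc 1 / (2 * π * V) * ∫ a in para u v, g a
      ≤ 1 / (2 * π * V) * (V * (2 * π * p)) := by gcongr
    _ = p := by field_simp

@[simp] theorem vec_apply_zero (x y : ℝ) : vec x y 0 = x := rfl

@[simp] theorem vec_apply_one (x y : ℝ) : vec x y 1 = y := rfl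

theorem para_vec_vec (a b : ℝ) (ha : 0 < a) (hb : 0 < b) :
    para (vec a 0) (vec 0 b) =
      (MeasurableEquiv.toLp 2 (Fin 2 → ℝ)).symm ⁻¹' univ.pi ![Ico 0 a, Ico 0 b] := by
  ext x
  simp only [para, mem_ofPred_eq, mem_preimage, mem_univ_pi, Fin.forall_fin_two]
  constructor
  · rintro ⟨t, s, ht0, ht1, hs0, hs1, rfl⟩
    simp only [MeasurableEquiv.toLp_symm_apply, PiLp.add_apply, PiLp.smul_apply, vec_apply_zero,
      vec_apply_one, smul_eq_mul, mul_zero, add_zero, zero_add, mem_Ico, Matrix.cons_val_zero,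
      Matrix.cons_val_one, Matrix.cons_val_fin_one]
    exact ⟨⟨by positivity, by nlinarith⟩, by positivity, by nlinarith⟩
  · rintro ⟨⟨h0, h1⟩, h2, h3⟩
    refine ⟨x 0 / a, x 1 / b, by positivity, (div_lt_one ha).2 h1, by positivity,
      (div_lt_one hb).2 h3, ?_⟩
    ext i
    fin_cases i <;> simp [ha.ne', hb.ne']

theorem volume_para_vec_vec (a b : ℝ) (ha : 0 < a) (hb : 0 < b) :
    volume (para (vec a 0) (vec 0 b)) = ENNReal.ofReal (a * b) := by
  have hbox : MeasurableSet (univ.pi ![Ico 0 a, Ico 0 b]) :=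
    MeasurableSet.univ_pi fun i => by fin_cases i <;> exact measurableSet_Ico
  rw [para_vec_vec a b ha hb, (EuclideanSpace.volume_preserving_symm_measurableEquiv_toLp
    (Fin 2)).measure_preimage hbox.nullMeasurableSet, volume_pi_pi, Fin.prod_univ_two]
  simp [Real.volume_Ico, ENNReal.ofReal_mul ha.le]

theorem linearIndependent_vec_vec {a b : ℝ} (ha : a ≠ 0) (hb : b ≠ 0) :
    LinearIndependent ℝ ![vec a 0, vec 0 b] := by
  rw [LinearIndependent.pair_iff]
  intro s t hst
  have h0 := congrArg (· 0) hst
  have h1 := congrArg (· 1) hst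
  simp only [PiLp.add_apply, PiLp.smul_apply, vec_apply_zero, vec_apply_one, smul_eq_mul,
    mul_zero, add_zero, zero_add, PiLp.zero_apply, mul_eq_zero] at h0 h1
  exact ⟨h0.resolve_right ha, h1.resolve_right hb⟩

def stripeColoring (k : ℕ) [NeZero k] (x : Plane) : Fin k :=
  (ZMod.finEquiv k).symm (⌊(k : ℝ) / 2 * x 0⌋ : ZMod k)

section stripeColoring

variable (k : ℕ) [NeZero k]

theorem stripeColoring_eq_iff (x y : Plane) :
    stripeColoring k x = stripeColoring k y ↔
      ⌊(k : ℝ) / 2 * x 0⌋ ≡ ⌊(k : ℝ) / 2 * y 0⌋ [ZMOD k] := by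
  rw [stripeColoring, stripeColoring, (ZMod.finEquiv k).symm.injective.eq_iff,
    ZMod.intCast_eq_intCast_iff]

theorem measurable_stripeColoring : Measurable (stripeColoring k) :=
  Measurable.comp (g := fun z : ℤ => (ZMod.finEquiv k).symm (z : ZMod k)) measurable_from_top
    ((measurable_const.mul (PiLp.continuous_apply 2 _ 0).measurable).floor)

theorem stripeColoring_add_vec_two_zero (x : Plane) :
    stripeColoring k (x + vec 2 0) = stripeColoring k x := by
  rw [stripeColoring_eq_iff]
  have : (k : ℝ) / 2 * (x + vec 2 0) 0 = k / 2 * x 0 + (k : ℤ) := by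
    rw [PiLp.add_apply, vec_apply_zero]; push_cast; ring
  rw [this, Int.floor_add_intCast]
  exact Int.add_modEq_right

theorem stripeColoring_add_vec_zero_one (x : Plane) :
    stripeColoring k (x + vec 0 1) = stripeColoring k x := by
  simp [stripeColoring, vec]

theorem cos_mem_Icc_of_stripeColoring_eq (hk : 2 ≤ k) (a : Plane) (θ : ℝ)
    (h : stripeColoring k a = stripeColoring k (a + dir θ)) :
    cos θ ∈ Icc (-(2 / k * Int.fract ((k : ℝ) / 2 * a 0)))
      (2 / k * (1 - Int.fract ((k : ℝ) / 2 * a 0))) := by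
  set r := (k : ℝ) / 2 * a 0
  have hshift : (k : ℝ) / 2 * (a + dir θ) 0 = r + k / 2 * cos θ := by
    rw [PiLp.add_apply, dir, vec_apply_zero]; ring
  rw [stripeColoring_eq_iff, hshift] at h
  have hk' : (2 : ℝ) ≤ k := by exact_mod_cast hk
  have hfloor := Int.floor_eq_floor_of_modEq h (by
    rw [add_sub_cancel_left, abs_mul, abs_of_pos (by positivity)]
    nlinarith [abs_cos_le_one θ])
  have hlo := Int.floor_le (r + k / 2 * cos θ)
  have hhi := Int.lt_floor_add_one (r + k / 2 * cos θ)
  rw [← hfloor] at hlo hhi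
  have hcos : cos θ = 2 / k * (k / 2 * cos θ) := by field_simp
  rw [hcos, ← mul_neg, Int.fract]
  constructor <;> gcongr <;> linarith

end stripeColoring

theorem intervalIntegral_stripeColoring_eq_le {k : ℕ} [NeZero k] (hk : 2 ≤ k) (a : Plane) :
    ∫ θ in (0 : ℝ)..(2 * π),
      (if stripeColoring k a = stripeColoring k (a + dir θ) then (1 : ℝ) else 0) ≤
        2 * π * (1 / k) := by
  set f := Int.fract ((k : ℝ) / 2 * a 0)
  have hk' : (2 : ℝ) ≤ k := by exact_mod_cast hk
  have hf0 : 0 ≤ f := Int.fract_nonneg _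
  have hf1 : f < 1 := Int.fract_lt_one _
  have hw : 2 / (k : ℝ) ≤ 1 := (div_le_one (by positivity)).2 hk'
  have hα : 0 ≤ 2 / k * f := by positivity
  have hβ : 0 ≤ 2 / k * (1 - f) := mul_nonneg (by positivity) (by linarith)
  calc ∫ θ in (0 : ℝ)..(2 * π),
        (if stripeColoring k a = stripeColoring k (a + dir θ) then (1 : ℝ) else 0)
      ≤ 2 * (arccos (-(2 / k * f)) - arccos (2 / k * (1 - f))) :=
        intervalIntegral_ite_le_of_cos_mem_Icc _ ((neg_nonpos.2 hα).trans hβ)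
          (cos_mem_Icc_of_stripeColoring_eq k hk a)
    _ ≤ 2 * (π / 2 * (2 / k * f + 2 / k * (1 - f))) := by
        gcongr
        exact arccos_neg_sub_arccos_le hα (mul_le_one₀ hw hf0 hf1.le) hβ
          (mul_le_one₀ hw (by linarith) (by linarith))
    _ = 2 * π * (1 / k) := by field_simp; ring

/-- Right-hand inequality of Theorem 1: for every `k ≥ 2` there is a periodic
`k`-coloring `c` of the plane with `p^per(c) ≤ 1/k`. -/
theorem stmt1 (k : ℕ) (hk : 2 ≤ k) :
    ∃ (c : Plane → Fin k) (u v : Plane), Measurable c ∧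
      LinearIndependent ℝ ![u, v] ∧
      (∀ x : Plane, c (x + u) = c x ∧ c (x + v) = c x) ∧
      pper c u v ≤ 1 / k := by
  have : NeZero k := ⟨by omega⟩
  refine ⟨stripeColoring k, vec 2 0, vec 0 1, measurable_stripeColoring k,
    linearIndependent_vec_vec two_ne_zero one_ne_zero,
    fun x => ⟨stripeColoring_add_vec_two_zero k x, stripeColoring_add_vec_zero_one k x⟩, ?_⟩
  refine pper_le_of_forall_integral_le _ _ _ _ ?_ (intervalIntegral_stripeColoring_eq_le hk)
  rw [volume_para_vec_vec 2 1 two_pos one_pos]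
  norm_num

end
end

section
/- Every periodic 2-coloring c of the plane satisfies p^per(c) ≥ 1/3. -/
open MeasureTheory Real

noncomputable section

/-!
Two of the three vertices `a`, `a + dir θ`, `a + dir (θ + π / 3)` of a unit equilateral triangle
have the same colour, so the agreement indicators of its three sides sum to at least `1`.
Averaged over `a` in a fundamental parallelogram and over `θ`, each of these indicators has mean
`p^per(c)`: for the second side rotate `θ`; for the third translate `a` by `dir θ`, which the
periodicity of `c` turns into a measure-preserving map of the torus. Hence `3 p^per(c) ≥ 1`.
-/

open Function Set Submodule

theorem Function.Periodic.of_mem_span_int {E β : Type*} [AddCommGroup E] {f : E → β} {s : Set E}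
    (hs : ∀ w ∈ s, Periodic f w) {l : E} (hl : l ∈ span ℤ s) : Periodic f l := by
  induction hl using Submodule.span_induction with
  | mem w hw => exact hs w hw
  | zero => exact fun x => by rw [add_zero]
  | add w w' _ _ hw hw' => exact hw.add_period hw'
  | smul n w _ hw => exact hw.zsmul n

theorem Function.Periodic.setIntegral_Ioc_comp_add_right {E : Type*} [NormedAddCommGroup E]
    [NormedSpace ℝ E] {g : ℝ → E} {T : ℝ} (hg : Periodic g T) (hT : 0 ≤ T) (s : ℝ) :
    ∫ θ in Ioc 0 T, g (θ + s) = ∫ θ in Ioc 0 T, g θ := by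
  rw [← intervalIntegral.integral_of_le hT, ← intervalIntegral.integral_of_le hT,
    intervalIntegral.integral_comp_add_right, zero_add, add_comm T,
    hg.intervalIntegral_add_eq s 0, zero_add]

theorem MeasureTheory.IsAddFundamentalDomain.setIntegral_comp_add_right {E F : Type*}
    [AddCommGroup E] [MeasurableSpace E] [MeasurableAdd E] [NormedAddCommGroup F]
    [NormedSpace ℝ F] {μ : Measure E} [μ.IsAddLeftInvariant] {L : AddSubgroup E} [Countable L]
    {D : Set E} (hD : IsAddFundamentalDomain L D μ) {f : E → F} (hf : ∀ l ∈ L, Periodic f l)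
    (w : E) : ∫ a in D, f (a + w) ∂μ = ∫ a in D, f a ∂μ := by
  have hD' : IsAddFundamentalDomain L ((· + w) '' D) μ := by
    simpa only [vadd_eq_add, add_comm w, ← image_vadd] using hD.vadd_of_comm w
  rw [← (measurePreserving_add_right μ w).setIntegral_image_emb
    (measurableEmbedding_addRight w)]
  refine hD'.setIntegral_eq hD fun l x => ?_
  rw [AddSubgroup.vadd_def, vadd_eq_add, add_comm]
  exact hf l l.2 x

theorem MeasureTheory.IsAddFundamentalDomain.integral_prod_Ioc_comp_add {E F : Type*}
    [AddCommGroup E] [MeasurableSpace E] [MeasurableAdd E] [NormedAddCommGroup F]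
    [NormedSpace ℝ F] {μ : Measure E} [μ.IsAddLeftInvariant] [SFinite μ] {L : AddSubgroup E}
    [Countable L] {D : Set E} (hD : IsAddFundamentalDomain L D μ) {T : ℝ} (hT : 0 ≤ T)
    {f : E → ℝ → F} (hfL : ∀ θ, ∀ l ∈ L, Periodic (f · θ) l) (hfT : ∀ a, Periodic (f a) T)
    (w : ℝ → E) (s : ℝ)
    (hf : Integrable (uncurry f) ((μ.restrict D).prod (volume.restrict (Ioc 0 T))))
    (hf' : Integrable (fun p => f (p.1 + w p.2) (p.2 + s))
      ((μ.restrict D).prod (volume.restrict (Ioc 0 T)))) :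
    ∫ p, f (p.1 + w p.2) (p.2 + s) ∂(μ.restrict D).prod (volume.restrict (Ioc 0 T)) =
      ∫ p, f p.1 p.2 ∂(μ.restrict D).prod (volume.restrict (Ioc 0 T)) := by
  have hslice : Periodic (fun ψ => ∫ a in D, f a ψ ∂μ) T := fun ψ => by
    simp only [hfT _ ψ]
  calc ∫ p, f (p.1 + w p.2) (p.2 + s) ∂(μ.restrict D).prod (volume.restrict (Ioc 0 T))
      = ∫ θ in Ioc 0 T, ∫ a in D, f (a + w θ) (θ + s) ∂μ := integral_prod_symm _ hf'
    _ = ∫ θ in Ioc 0 T, ∫ a in D, f a (θ + s) ∂μ := by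
      simp only [hD.setIntegral_comp_add_right (hfL _)]
    _ = ∫ θ in Ioc 0 T, ∫ a in D, f a θ ∂μ := hslice.setIntegral_Ioc_comp_add_right hT s
    _ = ∫ p, f p.1 p.2 ∂(μ.restrict D).prod (volume.restrict (Ioc 0 T)) :=
      (integral_prod_symm _ hf).symm

@[fun_prop]
theorem continuous_dir : Continuous dir := by
  unfold dir vec
  refine (PiLp.continuous_toLp 2 (fun _ : Fin 2 => ℝ)).comp (continuous_pi fun i => ?_)
  fin_cases i <;> simp <;> fun_prop

theorem dir_periodic : Periodic dir (2 * π) := by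
  intro θ; simp [dir]

theorem dir_add_pi_div_three (θ : ℝ) : dir (θ + π / 3) = dir θ + dir (θ + 2 * π / 3) := by
  have hcos : cos (2 * π / 3) = -(1 / 2) := by
    rw [show 2 * π / 3 = π - π / 3 by ring, cos_pi_sub, cos_pi_div_three]
  have hsin : sin (2 * π / 3) = √3 / 2 := by
    rw [show 2 * π / 3 = π - π / 3 by ring, sin_pi_sub, sin_pi_div_three]
  ext i
  fin_cases i
  · simp [dir, vec, cos_add, hcos, hsin]
    ring
  · simp [dir, vec, sin_add, hcos, hsin]
    ring

def agree {β : Type*} [DecidableEq β] (c : Plane → β) (a : Plane) (θ : ℝ) : ℝ :=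
  if c a = c (a + dir θ) then 1 else 0

section agree

variable {β : Type*} [DecidableEq β] {c : Plane → β}

theorem norm_agree_le_one (a : Plane) (θ : ℝ) : ‖agree c a θ‖ ≤ 1 := by
  unfold agree; split_ifs <;> simp

theorem agree_periodic (a : Plane) : Periodic (agree c a) (2 * π) := by
  intro θ; simp only [agree, dir_periodic θ]

theorem Function.Periodic.agree {l : Plane} (hl : Periodic c l) (θ : ℝ) :
    Periodic (agree c · θ) l := by
  intro a
  simp only [_root_.agree, hl a, add_right_comm a l, hl (a + dir θ)]

theorem integrable_agree_comp [MeasurableSpace β] [MeasurableEq β] (hc : Measurable c)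
    {α : Type*} [MeasurableSpace α] {μ : Measure α} [IsFiniteMeasure μ] {f : α → Plane}
    {g : α → ℝ} (hf : Measurable f) (hg : Measurable g) :
    Integrable (fun x => agree c (f x) (g x)) μ := by
  have hfg : Measurable fun x => f x + dir (g x) := by fun_prop
  refine .of_bound (Measurable.aestronglyMeasurable ?_) 1
    (.of_forall fun _ => norm_agree_le_one _ _)
  exact .ite (measurableSet_eq_fun (hc.comp hf) (hc.comp hfg)) measurable_const measurable_const

end agree

theorem one_le_agree_add_agree_add_agree (c : Plane → Fin 2) (a : Plane) (θ : ℝ) :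
    1 ≤ agree c a θ + agree c a (θ + π / 3) + agree c (a + dir θ) (θ + 2 * π / 3) := by
  have hpigeon : ∀ x y z : Fin 2, x = y ∨ x = z ∨ y = z := by decide
  simp only [agree, add_assoc, ← dir_add_pi_div_three]
  rcases hpigeon (c a) (c (a + dir θ)) (c (a + dir (θ + π / 3))) with h | h | h <;>
    simp only [h] <;> split_ifs <;> norm_num

theorem two_pi_mul_measureReal_le_three_mul_integral_agree {c : Plane → Fin 2} (hc : Measurable c)
    {L : AddSubgroup Plane} [Countable L] {D : Set Plane}
    (hD : IsAddFundamentalDomain L D volume) (hD_fin : volume D ≠ ⊤)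
    (hcL : ∀ l ∈ L, Periodic c l) :
    2 * π * volume.real D ≤
      3 * ∫ p, agree c p.1 p.2 ∂(volume.restrict D).prod (volume.restrict (Ioc 0 (2 * π))) := by
  set ρ := (volume.restrict D).prod (volume.restrict (Ioc 0 (2 * π)))
  have : IsFiniteMeasure (volume.restrict D) := isFiniteMeasure_restrict.2 hD_fin
  have hint : ∀ {f : Plane × ℝ → Plane} {g : Plane × ℝ → ℝ}, Measurable f → Measurable g →
      Integrable (fun p => agree c (f p) (g p)) ρ := integrable_agree_comp hc
  have hshift : ∀ (w : ℝ → Plane) (s : ℝ), Measurable w →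
      ∫ p, agree c (p.1 + w p.2) (p.2 + s) ∂ρ = ∫ p, agree c p.1 p.2 ∂ρ := fun w s hw =>
    hD.integral_prod_Ioc_comp_add (by positivity)
      (fun θ l hl => (hcL l hl).agree θ) agree_periodic w s
      (hint measurable_fst measurable_snd) (hint (by fun_prop) (by fun_prop))
  have i₁ := hint measurable_fst measurable_snd
  have i₂ : Integrable (fun p => agree c p.1 (p.2 + π / 3)) ρ := hint (by fun_prop) (by fun_prop)
  have i₃ : Integrable (fun p => agree c (p.1 + dir p.2) (p.2 + 2 * π / 3)) ρ :=
    hint (by fun_prop) (by fun_prop)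
  have h₂ : ∫ p, agree c p.1 (p.2 + π / 3) ∂ρ = ∫ p, agree c p.1 p.2 ∂ρ := by
    simpa using hshift 0 (π / 3) measurable_const
  have h₃ : ∫ p, agree c (p.1 + dir p.2) (p.2 + 2 * π / 3) ∂ρ = ∫ p, agree c p.1 p.2 ∂ρ :=
    hshift dir (2 * π / 3) continuous_dir.measurable
  calc 2 * π * volume.real D = ∫ _, (1 : ℝ) ∂ρ := by
        rw [integral_const, smul_eq_mul, mul_one, ← univ_prod_univ, measureReal_prod_prod]
        simp [pi_pos.le, mul_comm]
    _ ≤ ∫ p, (agree c p.1 p.2 + agree c p.1 (p.2 + π / 3) +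
          agree c (p.1 + dir p.2) (p.2 + 2 * π / 3)) ∂ρ :=
      integral_mono (integrable_const 1) ((i₁.add i₂).add i₃)
        fun p => one_le_agree_add_agree_add_agree c p.1 p.2
    _ = 3 * ∫ p, agree c p.1 p.2 ∂ρ := by
      rw [integral_add (by exact i₁.add i₂) i₃, integral_add i₁ i₂, h₂, h₃]
      ring

theorem pper_eq_integral_agree {k : ℕ} {c : Plane → Fin k} (hc : Measurable c) {u v : Plane}
    (hfin : volume (para u v) ≠ ⊤) :
    pper c u v = (2 * π * volume.real (para u v))⁻¹ *
      ∫ p, agree c p.1 p.2 ∂(volume.restrict (para u v)).prod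
        (volume.restrict (Ioc 0 (2 * π))) := by
  have : IsFiniteMeasure (volume.restrict (para u v)) := isFiniteMeasure_restrict.2 hfin
  rw [pper, one_div, integral_prod _ (integrable_agree_comp hc measurable_fst measurable_snd)]
  simp only [intervalIntegral.integral_of_le (by positivity : 0 ≤ 2 * π)]
  rfl

theorem para_eq_fundamentalDomain (b : Module.Basis (Fin 2) ℝ Plane) :
    para (b 0) (b 1) = ZSpan.fundamentalDomain b := by
  ext x
  constructor
  · rintro ⟨t, s, ht₀, ht₁, hs₀, hs₁, rfl⟩ i
    fin_cases i <;> simp [ht₀, ht₁, hs₀, hs₁]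
  · intro hx
    refine ⟨b.repr x 0, b.repr x 1, (hx 0).1, (hx 0).2, (hx 1).1, (hx 1).2, ?_⟩
    rw [← Fin.sum_univ_two (fun i => b.repr x i • b i), b.sum_repr]

/-- Every periodic 2-coloring of the plane satisfies `p^per(c) ≥ 1/3`. -/
theorem stmt8 (c : Plane → Fin 2) (hc : Measurable c) (u v : Plane)
    (huv : LinearIndependent ℝ ![u, v])
    (hper : ∀ x : Plane, c (x + u) = c x ∧ c (x + v) = c x) :
    1 / 3 ≤ pper c u v := by
  obtain ⟨b, hb⟩ : ∃ b : Module.Basis (Fin 2) ℝ Plane, ⇑b = ![u, v] :=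
    ⟨_, coe_basisOfLinearIndependentOfCardEqFinrank huv (by simp)⟩
  set D := ZSpan.fundamentalDomain b
  have hpara : para u v = D := by simpa [hb] using para_eq_fundamentalDomain b
  have hcL : ∀ l ∈ (span ℤ (range b)).toAddSubgroup, Periodic c l := by
    refine fun l hl => Periodic.of_mem_span_int ?_ hl
    rw [hb]
    rintro _ ⟨i, rfl⟩
    fin_cases i
    exacts [fun x => (hper x).1, fun x => (hper x).2]
  have : Countable (span ℤ (range b)).toAddSubgroup :=
    inferInstanceAs (Countable (span ℤ (range b)))
  have hfin : volume D ≠ ⊤ := (ZSpan.fundamentalDomain_isBounded b).measure_lt_top.ne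
  have hpos : 0 < volume.real D :=
    ENNReal.toReal_pos (ZSpan.measure_fundamentalDomain_ne_zero b) hfin
  have hkey := two_pi_mul_measureReal_le_three_mul_integral_agree hc
    (ZSpan.isAddFundamentalDomain' b volume) hfin hcL
  rw [pper_eq_integral_agree hc (hpara ▸ hfin), hpara, inv_mul_eq_div,
    le_div_iff₀ (by positivity)]
  linarith

end
end
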